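/- arXiv:1612.00571 — 11 statements merged into one kernel-verified Lean document; each statement's English description precedes it below -/
import Mathlib

section
/- If the vector (λ₁,...,λₙ) weakly supermajorizes (μ₁,...,μₙ) (i.e., ∑_{i=1}^j λ_(i) ≤ ∑_{i=1}^j μ_(i) for all j = 1,...,n, where λ_(1) ≤ ... ≤ λ_(n) is the increasing rearrangement), then for every r > 0 and every u ∈ (0,1), ∑_{i=1}^n r/(1-(1-λᵢ)u) ≥ ∑_{i=1}^n r/(1-(1-μᵢ)u). (This is the key inequality showing r_{X_{1:n}}(x) ≥ r_{Y_{1:n}}(x) for series systems under the PO model.) -/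
/-!
Sort both vectors increasingly, `a := λ ∘ sort λ` and `b := μ ∘ sort μ`. For a convex function `φ`
the tangent line at `b i` gives `φ (a i) - φ (b i) ≥ -φ' (b i) * (b i - a i)`. The weights
`-φ' (b i)` are nonnegative and decreasing in `i` when `φ` is decreasing and `b` is sorted, while
weak supermajorization says exactly that the partial sums of `b - a` are nonnegative, so by Abel
summation the right-hand sides add up to something nonnegative. The PO hazard rate
`t ↦ r / (1 - (1 - t) u)` is convex and decreasing on `t > 0`.
-/

open Finset

/-- `x` weakly supermajorizes `y`: partial sums of the increasing rearrangement
of `x` are dominated by those of `y`. -/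
def WSupermaj {n : ℕ} (x y : Fin n → ℝ) : Prop :=
  ∀ j : Fin n, ∑ i ∈ Finset.Iic j, (x ∘ Tuple.sort x) i ≤
    ∑ i ∈ Finset.Iic j, (y ∘ Tuple.sort y) i

lemma sum_range_mul_nonneg_of_antitoneOn {c d : ℕ → ℝ} {n : ℕ} (hc : AntitoneOn c (Set.Iio n))
    (hc₀ : ∀ i < n, 0 ≤ c i) (hd : ∀ j < n, 0 ≤ ∑ i ∈ range (j + 1), d i) :
    0 ≤ ∑ i ∈ range n, c i * d i := by
  rcases Nat.eq_zero_or_pos n with rfl | hn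
  · simp
  have hlast : n - 1 < n := Nat.sub_lt hn one_pos
  have hparts := sum_range_by_parts c d n
  simp only [smul_eq_mul] at hparts
  rw [hparts]
  refine sub_nonneg_of_le ((sum_nonpos fun i hi => ?_).trans ?_)
  · have hi : i + 1 < n := by rw [mem_range] at hi; omega
    exact mul_nonpos_of_nonpos_of_nonneg
      (sub_nonpos.2 (hc (show i < n by omega) hi (Nat.le_succ i))) (hd i (by omega))
  · exact mul_nonneg (hc₀ _ hlast) (by simpa [Nat.sub_add_cancel hn] using hd (n - 1) hlast)

lemma Fin.sum_mul_nonneg_of_antitone {n : ℕ} {c d : Fin n → ℝ} (hc : Antitone c)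
    (hc₀ : ∀ i, 0 ≤ c i) (hd : ∀ j, 0 ≤ ∑ i ∈ Iic j, d i) : 0 ≤ ∑ i, c i * d i := by
  let extend (f : Fin n → ℝ) (i : ℕ) : ℝ := if h : i < n then f ⟨i, h⟩ else 0
  have extend_val (f : Fin n → ℝ) (i : Fin n) : extend f i = f i := dif_pos i.isLt
  have h := sum_range_mul_nonneg_of_antitoneOn (c := extend c) (d := extend d) (n := n)
    (fun i hi j hj hij => by
      simpa only [extend, dif_pos (show i < n from hi), dif_pos (show j < n from hj)]
        using hc (Fin.mk_le_mk.2 hij))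
    (fun i hi => by simpa only [extend, dif_pos hi] using hc₀ ⟨i, hi⟩)
    (fun j hj => by
      have hIic := Fin.map_valEmbedding_Iic (⟨j, hj⟩ : Fin n)
      rw [Fin.val_mk] at hIic
      rw [Nat.range_succ_eq_Iic, ← hIic, sum_map]
      simpa only [Fin.valEmbedding_apply, extend_val] using hd ⟨j, hj⟩)
  simpa [← Fin.sum_univ_eq_sum_range, extend_val] using h

lemma ConvexOn.add_deriv_mul_sub_le {S : Set ℝ} {f : ℝ → ℝ} {x y : ℝ} (hf : ConvexOn ℝ S f)
    (hx : x ∈ S) (hy : y ∈ S) (hfy : DifferentiableAt ℝ f y) :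
    f y + deriv f y * (x - y) ≤ f x := by
  rcases lt_trichotomy x y with hxy | rfl | hxy
  · have hslope := hf.slope_le_deriv hx hy hxy hfy
    rw [slope_def_field, div_le_iff₀ (sub_pos.2 hxy)] at hslope
    linarith
  · simp
  · have hslope := hf.deriv_le_slope hy hx hxy hfy
    rw [slope_def_field, le_div_iff₀ (sub_pos.2 hxy)] at hslope
    linarith

theorem WSupermaj.sum_le_sum_of_convexOn {n : ℕ} {x y : Fin n → ℝ} {S : Set ℝ} {φ : ℝ → ℝ}
    (h : WSupermaj x y) (hφ : ConvexOn ℝ S φ) (hφd : ∀ t ∈ S, DifferentiableAt ℝ φ t)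
    (hφ' : ∀ t ∈ S, deriv φ t ≤ 0) (hx : ∀ i, x i ∈ S) (hy : ∀ i, y i ∈ S) :
    ∑ i, φ (y i) ≤ ∑ i, φ (x i) := by
  set a := x ∘ Tuple.sort x
  set b := y ∘ Tuple.sort y
  have hb : Monotone b := Tuple.monotone_sort y
  have abel : 0 ≤ ∑ i, -deriv φ (b i) * (b i - a i) :=
    Fin.sum_mul_nonneg_of_antitone
      (fun i j hij => neg_le_neg (hφ.monotoneOn_deriv hφd (hy _) (hy _) (hb hij)))
      (fun i => neg_nonneg.2 (hφ' _ (hy _)))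
      (fun j => by rw [sum_sub_distrib, sub_nonneg]; exact h j)
  rw [← Equiv.sum_comp (Tuple.sort x) (fun i => φ (x i)),
    ← Equiv.sum_comp (Tuple.sort y) (fun i => φ (y i)), ← sub_nonneg, ← sum_sub_distrib]
  refine abel.trans (sum_le_sum fun i _ => ?_)
  have tangent := hφ.add_deriv_mul_sub_le (hx (Tuple.sort x i)) (hy (Tuple.sort y i)) (hφd _ (hy _))
  simp only [a, b, Function.comp_apply]
  linarith

/-- Hazard rate of a PO-model component with parameter `t`, where `r` is the baseline hazard rate
and `u = F̄(x)` the baseline survival probability. -/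
noncomputable def poHazardRate (r u t : ℝ) : ℝ := r / (1 - (1 - t) * u)

lemma convexOn_poHazardRate {r : ℝ} (u : ℝ) (hr : 0 ≤ r) :
    ConvexOn ℝ {t | 0 < 1 - (1 - t) * u} (poHazardRate r u) := by
  let g : ℝ →ᵃ[ℝ] ℝ :=
    { toFun := fun t => 1 - (1 - t) * u
      linear := u • LinearMap.id
      map_vadd' := fun p v => by
        simp only [vadd_eq_add, LinearMap.smul_apply, LinearMap.id_coe, id_eq, smul_eq_mul]
        ring }
  refine (((convexOn_zpow (-1)).comp_affineMap g).smul hr).congr fun t _ => ?_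
  simp [poHazardRate, g, div_eq_mul_inv]

lemma hasDerivAt_poHazardRate (r u : ℝ) {t : ℝ} (ht : 1 - (1 - t) * u ≠ 0) :
    HasDerivAt (poHazardRate r u) (-(r * u) / (1 - (1 - t) * u) ^ 2) t := by
  have hg : HasDerivAt (fun t => 1 - (1 - t) * u) u t := by
    simpa using (((hasDerivAt_id t).const_sub 1).mul_const u).const_sub 1
  unfold poHazardRate
  simpa using (hasDerivAt_const t r).fun_div hg ht

lemma deriv_poHazardRate_nonpos {r u t : ℝ} (hr : 0 ≤ r) (hu : 0 ≤ u)
    (ht : 1 - (1 - t) * u ≠ 0) : deriv (poHazardRate r u) t ≤ 0 := by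
  rw [(hasDerivAt_poHazardRate r u ht).deriv]
  exact div_nonpos_of_nonpos_of_nonneg (neg_nonpos.2 (mul_nonneg hr hu)) (sq_nonneg _)

lemma one_sub_one_sub_mul_pos {u t : ℝ} (hu₀ : 0 ≤ u) (hu₁ : u ≤ 1) (ht : 0 < t) :
    0 < 1 - (1 - t) * u := by
  nlinarith [mul_nonneg (mul_nonneg ht.le ht.le) hu₀]

theorem series_po_hazard_ge_of_wSupermaj {n : ℕ} (lam mu : Fin n → ℝ)
    (hlam : ∀ i, 0 < lam i) (hmu : ∀ i, 0 < mu i)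
    (hmaj : WSupermaj lam mu) :
    ∀ r : ℝ, 0 < r → ∀ u : ℝ, u ∈ Set.Ioo (0:ℝ) 1 →
      ∑ i, r / (1 - (1 - lam i) * u) ≥ ∑ i, r / (1 - (1 - mu i) * u) := by
  rintro r hr u ⟨hu₀, hu₁⟩
  have hdom {t : ℝ} (ht : 0 < t) : t ∈ {t | 0 < 1 - (1 - t) * u} :=
    one_sub_one_sub_mul_pos hu₀.le hu₁.le ht
  exact hmaj.sum_le_sum_of_convexOn (convexOn_poHazardRate u hr.le)
    (fun t ht => (hasDerivAt_poHazardRate r u (ne_of_gt ht)).differentiableAt)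
    (fun t ht => deriv_poHazardRate_nonpos hr.le hu₀.le (ne_of_gt ht))
    (fun i => hdom (hlam i)) (fun i => hdom (hmu i))
end

section
/- For fixed u ∈ (0,1), the function φ(a₁,...,aₙ) = ∏_{i=1}^n [e^{aᵢ} u / (1 - (1-e^{aᵢ})u)] is Schur-concave in (a₁,...,aₙ) ∈ ℝⁿ and increasing in each aᵢ. -/
/-!
Each factor equals `σ (aᵢ + log (u / (1 - u)))`, with `σ` the logistic sigmoid, so monotonicity
is that of `σ`, and Schur-concavity of the product is Karamata's inequality for the concave
function `log ∘ σ` (its derivative `1 - σ` decreases). Karamata's inequality for a convex `f`: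
with `a'`, `b'` the increasing rearrangements, `f (a'ᵢ) - f (b'ᵢ) ≥ cᵢ (a'ᵢ - b'ᵢ)` for the right
derivative `cᵢ` of `f` at `b'ᵢ`, which increases with `i`; summation by parts against the
partial-sum inequalities of majorization makes `∑ cᵢ (b'ᵢ - a'ᵢ) ≤ 0`.
-/

open Finset

/-- `x` majorizes `y`. -/
def Majorizes {n : ℕ} (x y : Fin n → ℝ) : Prop :=
  (∀ j : Fin n, ∑ i ∈ Finset.Iic j, (x ∘ Tuple.sort x) i ≤
      ∑ i ∈ Finset.Iic j, (y ∘ Tuple.sort y) i) ∧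
    ∑ i, x i = ∑ i, y i

section Abel

variable {R : Type*} [CommRing R] [PartialOrder R] [IsOrderedRing R]

theorem Finset.sum_range_mul_nonpos_of_monotoneOn {n : ℕ} {c e : ℕ → R}
    (hc : MonotoneOn c (Set.Iio n)) (he : ∀ j < n, 0 ≤ ∑ i ∈ range (j + 1), e i)
    (he₀ : ∑ i ∈ range n, e i = 0) : ∑ i ∈ range n, c i * e i ≤ 0 := by
  simp only [← smul_eq_mul, sum_range_by_parts c e n, he₀, smul_zero, zero_sub, neg_nonpos]
  refine sum_nonneg fun i hi => ?_
  have hi : i + 1 < n := by rw [mem_range] at hi; omega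
  exact mul_nonneg (sub_nonneg.2 (hc (by simp; omega) hi i.le_succ)) (he i (by omega))

theorem Fin.sum_mul_nonpos_of_monotone {n : ℕ} {c e : Fin n → R} (hc : Monotone c)
    (he : ∀ j, 0 ≤ ∑ i ∈ Iic j, e i) (he₀ : ∑ i, e i = 0) : ∑ i, c i * e i ≤ 0 := by
  let extend (f : Fin n → R) (k : ℕ) : R := if h : k < n then f ⟨k, h⟩ else 0
  have extend_val (f : Fin n → R) (i : Fin n) : extend f i = f i := dif_pos i.2
  have sum_Iic (j : Fin n) : ∑ i ∈ Iic j, e i = ∑ k ∈ range (j + 1), extend e k := by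
    rw [Nat.range_succ_eq_Iic, ← Fin.map_valEmbedding_Iic, sum_map]
    simp only [Fin.valEmbedding_apply, extend_val]
  have hsum : ∑ i, c i * e i = ∑ k ∈ range n, extend c k * extend e k := by
    simp only [← Fin.sum_univ_eq_sum_range, extend_val]
  rw [hsum]
  refine sum_range_mul_nonpos_of_monotoneOn ?_ (fun j hj => ?_) ?_
  · intro k hk l hl hkl
    simp only [Set.mem_Iio] at hk hl
    simpa only [extend, dif_pos hk, dif_pos hl] using hc (Fin.mk_le_mk.2 hkl)
  · simpa only [sum_Iic] using he ⟨j, hj⟩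
  · simpa only [← Fin.sum_univ_eq_sum_range, extend_val] using he₀

end Abel

namespace ConvexOn

variable {S : Set ℝ} {f : ℝ → ℝ}

theorem rightDeriv_mul_sub_le_sub (hf : ConvexOn ℝ S f) {x y : ℝ} (hx : x ∈ interior S)
    (hy : y ∈ S) : derivWithin f (Set.Ioi x) x * (y - x) ≤ f y - f x := by
  rcases lt_trichotomy x y with hxy | rfl | hyx
  · have := hf.rightDeriv_le_slope_of_mem_interior hx hy hxy
    rwa [slope_def_field, le_div_iff₀ (sub_pos.2 hxy)] at this
  · simp
  · have := (hf.slope_le_leftDeriv_of_mem_interior hy hx hyx).trans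
      (hf.leftDeriv_le_rightDeriv_of_mem_interior hx)
    rw [slope_def_field, div_le_iff₀ (sub_pos.2 hyx)] at this
    linarith

theorem sum_le_sum_of_majorizes (hf : ConvexOn ℝ S f) {n : ℕ} {a b : Fin n → ℝ}
    (ha : ∀ i, a i ∈ S) (hb : ∀ i, b i ∈ interior S) (hab : Majorizes a b) :
    ∑ i, f (b i) ≤ ∑ i, f (a i) := by
  set a' := a ∘ Tuple.sort a
  set b' := b ∘ Tuple.sort b
  set c : Fin n → ℝ := fun i => derivWithin f (Set.Ioi (b' i)) (b' i)
  have hc : Monotone c := fun i j hij =>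
    hf.monotoneOn_rightDeriv (hb _) (hb _) (Tuple.monotone_sort b hij)
  have hsum_a : ∑ i, a' i = ∑ i, a i := Equiv.sum_comp _ _
  have hsum_b : ∑ i, b' i = ∑ i, b i := Equiv.sum_comp _ _
  have abel : ∑ i, c i * (b' i - a' i) ≤ 0 := by
    refine Fin.sum_mul_nonpos_of_monotone hc (fun j => ?_) ?_
    · simpa only [sum_sub_distrib, sub_nonneg] using hab.1 j
    · rw [sum_sub_distrib, hsum_a, hsum_b, hab.2, sub_self]
  have grad : ∑ i, c i * (a' i - b' i) ≤ ∑ i, (f (a' i) - f (b' i)) :=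
    sum_le_sum fun i _ => hf.rightDeriv_mul_sub_le_sub (hb _) (ha _)
  calc ∑ i, f (b i) = ∑ i, f (b' i) := (Equiv.sum_comp _ (fun i => f (b i))).symm
    _ ≤ ∑ i, f (a' i) := by
      simp only [mul_sub, sum_sub_distrib] at abel grad
      linarith
    _ = ∑ i, f (a i) := Equiv.sum_comp _ (fun i => f (a i))

end ConvexOn

theorem ConcaveOn.sum_le_sum_of_majorizes {S : Set ℝ} {g : ℝ → ℝ} (hg : ConcaveOn ℝ S g)
    {n : ℕ} {a b : Fin n → ℝ} (ha : ∀ i, a i ∈ S) (hb : ∀ i, b i ∈ interior S)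
    (hab : Majorizes a b) : ∑ i, g (a i) ≤ ∑ i, g (b i) := by
  simpa only [Pi.neg_apply, sum_neg_distrib, neg_le_neg_iff] using
    hg.neg.sum_le_sum_of_majorizes ha hb hab

theorem prod_le_prod_of_majorizes {g : ℝ → ℝ} (hg_pos : ∀ x, 0 < g x)
    (hg : ConcaveOn ℝ Set.univ (fun x => Real.log (g x))) {n : ℕ} {a b : Fin n → ℝ}
    (hab : Majorizes a b) : ∏ i, g (a i) ≤ ∏ i, g (b i) := by
  rw [← Real.log_le_log_iff (prod_pos fun i _ => hg_pos _) (prod_pos fun i _ => hg_pos _),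
    Real.log_prod fun i _ => (hg_pos _).ne', Real.log_prod fun i _ => (hg_pos _).ne']
  exact hg.sum_le_sum_of_majorizes (fun _ => trivial) (fun _ => by simp) hab

namespace Real

theorem concaveOn_log_sigmoid : ConcaveOn ℝ Set.univ (fun x => log (sigmoid x)) := by
  have hderiv (x : ℝ) : HasDerivAt (fun x => log (sigmoid x)) (1 - sigmoid x) x := by
    convert (hasDerivAt_sigmoid x).log (sigmoid_pos x).ne' using 1
    field_simp [(sigmoid_pos x).ne']
  refine Antitone.concaveOn_univ_of_deriv (fun x => (hderiv x).differentiableAt) ?_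
  rw [funext fun x => (hderiv x).deriv]
  exact fun x y hxy => sub_le_sub_left (sigmoid_monotone hxy) 1

theorem exp_mul_div_eq_sigmoid_add_log {u : ℝ} (hu : u ∈ Set.Ioo (0 : ℝ) 1) (t : ℝ) :
    exp t * u / (1 - (1 - exp t) * u) = sigmoid (t + log (u / (1 - u))) := by
  obtain ⟨hu₀, hu₁⟩ := hu
  have h1u : 0 < 1 - u := sub_pos.2 hu₁
  rw [sigmoid_def, neg_add, exp_add, exp_neg, exp_neg, exp_log (div_pos hu₀ h1u), ← inv_div,
    inv_inj]
  field_simp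
  ring

end Real

theorem po_series_survival_schur_concave_and_increasing {n : ℕ} (u : ℝ)
    (hu : u ∈ Set.Ioo (0:ℝ) 1) :
    (∀ a b : Fin n → ℝ, Majorizes a b →
      ∏ i, Real.exp (a i) * u / (1 - (1 - Real.exp (a i)) * u) ≤
        ∏ i, Real.exp (b i) * u / (1 - (1 - Real.exp (b i)) * u)) ∧
    (∀ a : Fin n → ℝ, ∀ i : Fin n, Monotone (fun t : ℝ =>
      ∏ j, Real.exp (Function.update a i t j) * u /
        (1 - (1 - Real.exp (Function.update a i t j)) * u))) := by
  simp only [Real.exp_mul_div_eq_sigmoid_add_log hu]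
  set L := Real.log (u / (1 - u))
  refine ⟨fun a b hab => prod_le_prod_of_majorizes (g := fun x => Real.sigmoid (x + L))
    (fun _ => Real.sigmoid_pos _) (Real.concaveOn_log_sigmoid.translate_left L) hab,
    fun a i => ?_⟩
  have hmono : Monotone fun x : Fin n → ℝ => ∏ j, Real.sigmoid (x j + L) := fun x y hxy =>
    prod_le_prod (fun j _ => (Real.sigmoid_pos _).le)
      (fun j _ => Real.sigmoid_monotone ((add_le_add_iff_right L).2 (hxy j)))
  exact hmono.comp Function.update_mono
end

section
/- Let λ₁,...,λₙ > 0 and let λ ≥ (λ₁λ₂⋯λₙ)^{1/n} (geometric mean). Then for every u ∈ (0,1), ∏_{i=1}^n [λᵢ u/(1-(1-λᵢ)u)] ≤ [λ u/(1-(1-λ)u)]^n. -/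
open Finset

private lemma mahler_aux {n : ℕ} (hn : 0 < n) (a : ℝ) (ha : 0 < a)
    (b : Fin n → ℝ) (hb : ∀ i, 0 < b i) :
    (a + (∏ i, b i) ^ ((1:ℝ) / n)) ^ n ≤ ∏ i, (a + b i) := by
  have hnR : (0:ℝ) < n := by exact_mod_cast hn
  set P : Fin n → ℝ := fun i => a + b i with hPdef
  have hP : ∀ i, 0 < P i := fun i => add_pos ha (hb i)
  have hQ : (0:ℝ) < ∏ i, P i := Finset.prod_pos fun i _ => hP i
  have hw : ∑ _i : Fin n, (1:ℝ)/n = 1 := by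
    rw [Finset.sum_const, Finset.card_univ, Fintype.card_fin, nsmul_eq_mul]
    field_simp
  have h1 := Real.geom_mean_le_arith_mean_weighted Finset.univ (fun _ => (1:ℝ)/n)
    (fun i => a / P i) (fun i _ => by positivity) hw (fun i _ => (div_pos ha (hP i)).le)
  have h2 := Real.geom_mean_le_arith_mean_weighted Finset.univ (fun _ => (1:ℝ)/n)
    (fun i => b i / P i) (fun i _ => by positivity) hw (fun i _ => (div_pos (hb i) (hP i)).le)
  have hsum : (∑ i, (1:ℝ)/n * (a / P i)) + (∑ i, (1:ℝ)/n * (b i / P i)) = 1 := by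
    rw [← Finset.sum_add_distrib]
    have : ∀ i : Fin n, (1:ℝ)/n * (a / P i) + (1:ℝ)/n * (b i / P i) = (1:ℝ)/n := by
      intro i
      have := (hP i).ne'
      field_simp [hPdef]
      ring
    simp_rw [this]
    exact hw
  have hprod1 : ∏ i, (a / P i) ^ ((1:ℝ)/n) = a / (∏ i, P i) ^ ((1:ℝ)/n) := by
    rw [Real.finset_prod_rpow _ _ (fun i _ => (div_pos ha (hP i)).le),
      Finset.prod_div_distrib, Finset.prod_const, Finset.card_univ, Fintype.card_fin,
      Real.div_rpow (by positivity) hQ.le, ← Real.rpow_natCast a n, ← Real.rpow_mul ha.le,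
      mul_one_div_cancel hnR.ne', Real.rpow_one]
  have hprod2 : ∏ i, (b i / P i) ^ ((1:ℝ)/n) =
      (∏ i, b i) ^ ((1:ℝ)/n) / (∏ i, P i) ^ ((1:ℝ)/n) := by
    rw [Real.finset_prod_rpow _ _ (fun i _ => (div_pos (hb i) (hP i)).le),
      Finset.prod_div_distrib, Real.div_rpow (Finset.prod_pos fun i _ => hb i).le hQ.le]
  rw [hprod1] at h1
  rw [hprod2] at h2
  have key : a + (∏ i, b i) ^ ((1:ℝ)/n) ≤ (∏ i, P i) ^ ((1:ℝ)/n) := by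
    have hQr : (0:ℝ) < (∏ i, P i) ^ ((1:ℝ)/n) := Real.rpow_pos_of_pos hQ _
    rw [← div_le_one hQr, add_div]
    calc a / (∏ i, P i) ^ ((1:ℝ)/n) + (∏ i, b i) ^ ((1:ℝ)/n) / (∏ i, P i) ^ ((1:ℝ)/n)
        ≤ (∑ i, (1:ℝ)/n * (a / P i)) + (∑ i, (1:ℝ)/n * (b i / P i)) := add_le_add h1 h2
      _ = 1 := hsum
  calc (a + (∏ i, b i) ^ ((1:ℝ)/n)) ^ n ≤ ((∏ i, P i) ^ ((1:ℝ)/n)) ^ n := by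
        exact pow_le_pow_left₀
          (add_nonneg ha.le (Real.rpow_nonneg (Finset.prod_pos fun i _ => hb i).le _)) key n
    _ = ∏ i, P i := by
        rw [← Real.rpow_natCast ((∏ i, P i) ^ ((1:ℝ)/n)) n, ← Real.rpow_mul hQ.le,
          one_div_mul_cancel hnR.ne', Real.rpow_one]

theorem series_po_st_homog_geometric_mean {n : ℕ} (lam : Fin n → ℝ) (l : ℝ)
    (hlam : ∀ i, 0 < lam i)
    (hl : l ≥ (∏ i, lam i) ^ ((1:ℝ) / n)) :
    ∀ u : ℝ, u ∈ Set.Ioo (0:ℝ) 1 →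
      ∏ i, lam i * u / (1 - (1 - lam i) * u) ≤
        (l * u / (1 - (1 - l) * u)) ^ n := by
  intro u hu
  obtain ⟨hu0, hu1⟩ := hu
  rcases Nat.eq_zero_or_pos n with hn | hn
  · subst hn; simp
  have hnR : (0:ℝ) < n := by exact_mod_cast hn
  have ha : (0:ℝ) < 1 - u := by linarith
  set G : ℝ := (∏ i, lam i) ^ ((1:ℝ)/n) with hGdef
  have hprodpos : (0:ℝ) < ∏ i, lam i := Finset.prod_pos fun i _ => hlam i
  have hG : 0 < G := Real.rpow_pos_of_pos hprodpos _
  have hGl : G ≤ l := hl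
  have hlpos : 0 < l := lt_of_lt_of_le hG hGl
  -- denominators
  have hden : ∀ t : ℝ, 0 < t → 1 - (1 - t) * u = (1 - u) + t * u := by intros; ring
  have hdenl : (0:ℝ) < 1 - (1 - l) * u := by rw [hden l hlpos]; positivity
  have hdenG : (0:ℝ) < (1 - u) + G * u := by positivity
  -- G^n = prod
  have hGn : G ^ n = ∏ i, lam i := by
    rw [hGdef, ← Real.rpow_natCast ((∏ i, lam i) ^ ((1:ℝ)/n)) n, ← Real.rpow_mul hprodpos.le,
      one_div_mul_cancel hnR.ne', Real.rpow_one]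
  -- Mahler
  have hmahler : ((1 - u) + G * u) ^ n ≤ ∏ i, ((1 - u) + lam i * u) := by
    have h := mahler_aux hn (1 - u) ha (fun i => lam i * u)
      (fun i => mul_pos (hlam i) hu0)
    have hbu : (∏ i, lam i * u) ^ ((1:ℝ)/n) = G * u := by
      rw [Finset.prod_mul_distrib, Finset.prod_const, Finset.card_univ, Fintype.card_fin,
        Real.mul_rpow hprodpos.le (by positivity), ← Real.rpow_natCast u n,
        ← Real.rpow_mul hu0.le, mul_one_div_cancel hnR.ne', Real.rpow_one, hGdef]
    rwa [hbu] at h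
  have hdenprod : (0:ℝ) < ∏ i, ((1 - u) + lam i * u) :=
    Finset.prod_pos fun i _ => add_pos ha (mul_pos (hlam i) hu0)
  -- rewrite LHS
  have hLHS : ∏ i, lam i * u / (1 - (1 - lam i) * u) =
      (G * u) ^ n / ∏ i, ((1 - u) + lam i * u) := by
    rw [Finset.prod_div_distrib]
    congr 1
    · rw [Finset.prod_mul_distrib, Finset.prod_const, Finset.card_univ, Fintype.card_fin,
        ← hGn, mul_pow]
    · exact Finset.prod_congr rfl fun i _ => by rw [hden (lam i) (hlam i)]
  rw [hLHS]
  have step1 : (G * u) ^ n / ∏ i, ((1 - u) + lam i * u) ≤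
      (G * u / ((1 - u) + G * u)) ^ n := by
    rw [div_pow]
    exact div_le_div_of_nonneg_left (by positivity) (by positivity) hmahler
  refine step1.trans ?_
  apply pow_le_pow_left₀ (by positivity)
  rw [hden l hlpos, div_le_div_iff₀ hdenG (by positivity)]
  nlinarith [mul_le_mul_of_nonneg_right hGl ha.le, hu0.le, sq_nonneg u]
end

section
/- Let λ₁,...,λₙ > 0 and let λ ≥ (1/n)∑_{i=1}^n λᵢ. Then for every u ∈ (0,1), ∑_{i=1}^n 1/(1-(1-λᵢ)u) ≥ n/(1-(1-λ)u). (Hence the heterogeneous series system is smaller than the homogeneous one in the hazard rate order: X_{1:n} ≤_{hr} Y_{1:n}.) -/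
open Finset

theorem series_po_hr_homog_arithmetic_mean {n : ℕ} (lam : Fin n → ℝ) (l : ℝ)
    (hlam : ∀ i, 0 < lam i)
    (hl : l ≥ (1 / n) * ∑ i, lam i) :
    ∀ u : ℝ, u ∈ Set.Ioo (0:ℝ) 1 →
      ∑ i, 1 / (1 - (1 - lam i) * u) ≥ n / (1 - (1 - l) * u) := by
  rintro u ⟨hu0, hu1⟩
  rcases Nat.eq_zero_or_pos n with hn | hn
  · subst hn; simp
  have hnR : (0:ℝ) < n := Nat.cast_pos.mpr hn
  set a : Fin n → ℝ := fun i => 1 - (1 - lam i) * u with ha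
  have hapos : ∀ i, 0 < a i := by
    intro i
    have : a i = (1 - u) + lam i * u := by ring
    rw [this]
    have := mul_pos (hlam i) hu0
    linarith
  have hlpos : 0 < l := by
    have hsum : 0 < ∑ i, lam i :=
      Finset.sum_pos (fun i _ => hlam i) (Finset.univ_nonempty_iff.mpr ⟨⟨0, hn⟩⟩)
    have : 0 < (1 / (n:ℝ)) * ∑ i, lam i := by positivity
    linarith
  have hb : 0 < 1 - (1 - l) * u := by
    have : 1 - (1 - l) * u = (1 - u) + l * u := by ring
    rw [this]
    have := mul_pos hlpos hu0
    linarith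
  -- sum of a i ≤ n * (1 - (1-l)*u)
  have hsuma : ∑ i, a i ≤ n * (1 - (1 - l) * u) := by
    have hs : ∑ i, lam i ≤ n * l := by
      have := hl
      rw [ge_iff_le, div_mul_eq_mul_div, one_mul, div_le_iff₀ hnR] at this
      linarith [this]
    have : ∑ i, a i = n * (1 - u) + (∑ i, lam i) * u := by
      have h1 : ∀ i, a i = (1 - u) + lam i * u := fun i => by simp only [ha]; ring
      simp_rw [h1]
      rw [Finset.sum_add_distrib, Finset.sum_const, ← Finset.sum_mul]
      simp [mul_comm]
    rw [this]
    nlinarith [mul_le_mul_of_nonneg_right hs hu0.le]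
  have hsumapos : 0 < ∑ i, a i := Finset.sum_pos (fun i _ => hapos i) ⟨⟨0, hn⟩, Finset.mem_univ _⟩
  -- Sedrakyan: (∑ 1)^2 / ∑ a ≤ ∑ 1 / a
  have hced : ((n:ℝ))^2 / ∑ i, a i ≤ ∑ i, 1 / a i := by
    have := Finset.sq_sum_div_le_sum_sq_div (Finset.univ : Finset (Fin n)) (fun _ => (1:ℝ))
      (fun i _ => hapos i)
    simpa using this
  have key : (n:ℝ) / (1 - (1 - l) * u) ≤ ((n:ℝ))^2 / ∑ i, a i := by
    rw [div_le_div_iff₀ hb hsumapos]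
    nlinarith [hsuma]
  exact le_trans key hced
end

section
/- Let n₁, n₂ ≥ 1, n = n₁+n₂, and suppose max{λ₁, λ₂} ≤ min{μ₁, μ₂} with all parameters positive. Then the function u ↦ [n₁/(1-(1-λ₁)u) + n₂/(1-(1-λ₂)u)] / [n₁/(1-(1-μ₁)u) + n₂/(1-(1-μ₂)u)] is increasing in u ∈ (0,1). (Since u = F̄(x) is decreasing in x, this means X_{1:n} ages faster than Y_{1:n} in terms of the hazard rate: r_{X_{1:n}}(x)/r_{Y_{1:n}}(x) is decreasing in x.) -/
open Finset

private lemma den_pos' (lam t : ℝ) (hl : 0 < lam) (ht : 0 < t) (ht1 : t < 1) :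
    0 < 1 - (1 - lam) * t := by nlinarith [mul_pos hl ht]

private lemma pair_ineq (lam mu u v : ℝ) (hlm : lam ≤ mu) (hl : 0 < lam) (hm : 0 < mu)
    (hu : 0 < u) (huv : u ≤ v) (hv : v < 1) :
    1 / ((1 - (1 - lam) * u) * (1 - (1 - mu) * v)) ≤
      1 / ((1 - (1 - lam) * v) * (1 - (1 - mu) * u)) := by
  have hu1 : u < 1 := lt_of_le_of_lt huv hv
  have hv0 : 0 < v := lt_of_lt_of_le hu huv
  have p1 := den_pos' lam u hl hu hu1
  have p2 := den_pos' lam v hl hv0 hv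
  have p3 := den_pos' mu u hm hu hu1
  have p4 := den_pos' mu v hm hv0 hv
  rw [div_le_div_iff₀ (by positivity) (by positivity)]
  nlinarith [mul_nonneg (sub_nonneg.mpr hlm) (sub_nonneg.mpr huv)]

private lemma expand_mul (a b c d x y z w : ℝ) (hx : x ≠ 0) (hy : y ≠ 0)
    (hz : z ≠ 0) (hw : w ≠ 0) :
    (a / x + b / y) * (c / z + d / w) =
      a * c * (1 / (x * z)) + a * d * (1 / (x * w))
        + b * c * (1 / (y * z)) + b * d * (1 / (y * w)) := by
  field_simp
  ring

theorem series_po_relative_ageing_outlier_maxmin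
    (n₁ n₂ : ℕ) (hn₁ : 1 ≤ n₁) (hn₂ : 1 ≤ n₂)
    (lam₁ lam₂ mu₁ mu₂ : ℝ)
    (hl₁ : 0 < lam₁) (hl₂ : 0 < lam₂) (hm₁ : 0 < mu₁) (hm₂ : 0 < mu₂)
    (h : max lam₁ lam₂ ≤ min mu₁ mu₂) :
    MonotoneOn (fun u : ℝ =>
      (n₁ / (1 - (1 - lam₁) * u) + n₂ / (1 - (1 - lam₂) * u)) /
        (n₁ / (1 - (1 - mu₁) * u) + n₂ / (1 - (1 - mu₂) * u)))
      (Set.Ioo (0:ℝ) 1) := by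
  have h11 : lam₁ ≤ mu₁ := le_trans (le_max_left _ _) (le_trans h (min_le_left _ _))
  have h12 : lam₁ ≤ mu₂ := le_trans (le_max_left _ _) (le_trans h (min_le_right _ _))
  have h21 : lam₂ ≤ mu₁ := le_trans (le_max_right _ _) (le_trans h (min_le_left _ _))
  have h22 : lam₂ ≤ mu₂ := le_trans (le_max_right _ _) (le_trans h (min_le_right _ _))
  intro u hu v hv huv
  obtain ⟨hu0, hu1⟩ := hu
  obtain ⟨hv0, hv1⟩ := hv
  have pl1u := den_pos' lam₁ u hl₁ hu0 hu1
  have pl2u := den_pos' lam₂ u hl₂ hu0 hu1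
  have pm1u := den_pos' mu₁ u hm₁ hu0 hu1
  have pm2u := den_pos' mu₂ u hm₂ hu0 hu1
  have pl1v := den_pos' lam₁ v hl₁ hv0 hv1
  have pl2v := den_pos' lam₂ v hl₂ hv0 hv1
  have pm1v := den_pos' mu₁ v hm₁ hv0 hv1
  have pm2v := den_pos' mu₂ v hm₂ hv0 hv1
  have hn₁' : (0:ℝ) < n₁ := by exact_mod_cast Nat.lt_of_lt_of_le Nat.zero_lt_one hn₁
  have hn₂' : (0:ℝ) < n₂ := by exact_mod_cast Nat.lt_of_lt_of_le Nat.zero_lt_one hn₂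
  have hDu : 0 < (n₁:ℝ) / (1 - (1 - mu₁) * u) + n₂ / (1 - (1 - mu₂) * u) := by positivity
  have hDv : 0 < (n₁:ℝ) / (1 - (1 - mu₁) * v) + n₂ / (1 - (1 - mu₂) * v) := by positivity
  simp only
  rw [div_le_div_iff₀ hDu hDv]
  rw [expand_mul _ _ _ _ _ _ _ _ pl1u.ne' pl2u.ne' pm1v.ne' pm2v.ne',
      expand_mul _ _ _ _ _ _ _ _ pl1v.ne' pl2v.ne' pm1u.ne' pm2u.ne']
  gcongr ?_ + ?_ + ?_ + ?_
  · exact mul_le_mul_of_nonneg_left (pair_ineq lam₁ mu₁ u v h11 hl₁ hm₁ hu0 huv hv1) (by positivity)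
  · exact mul_le_mul_of_nonneg_left (pair_ineq lam₁ mu₂ u v h12 hl₁ hm₂ hu0 huv hv1) (by positivity)
  · exact mul_le_mul_of_nonneg_left (pair_ineq lam₂ mu₁ u v h21 hl₂ hm₁ hu0 huv hv1) (by positivity)
  · exact mul_le_mul_of_nonneg_left (pair_ineq lam₂ mu₂ u v h22 hl₂ hm₂ hu0 huv hv1) (by positivity)
end

section
/- For fixed u ∈ (0,1), the function ψ(λ₁,...,λₙ) = ∑_{i=1}^n λᵢ/(1-(1-λᵢ)u) is increasing in each λᵢ and Schur-concave on (0,∞)ⁿ. Consequently, if (λ₁,...,λₙ) weakly supermajorizes (μ₁,...,μₙ), then ∑_{i=1}^n λᵢ/(1-(1-λᵢ)u) ≤ ∑_{i=1}^n μᵢ/(1-(1-μᵢ)u). -/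
open Finset

/-!
The denominator `poDenom u t = (1 - u) + t u` is positive and increasing in `t > 0`, and the summand
`poTerm u t = t / poDenom u t` has the difference quotient
`poSlope u s t = (1 - u) / (poDenom u s * poDenom u t)`, which is nonnegative (so the summand is
increasing) and decreasing in both `s` and `t`. If `a` and `b` are the increasing rearrangements of
`λ` and `μ`, then `∑ poTerm (b i) - ∑ poTerm (a i) = ∑ g i (b i - a i)` with
`g i = poSlope (a i) (b i)` nonnegative and decreasing in `i`, and Abel summation turns this into a
nonnegative combination of the partial sums `∑_{i ≤ j} (b i - a i) ≥ 0`.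
-/

theorem Fin.sum_mul_nonneg_of_antitone_s11 {R : Type*} [CommRing R] [PartialOrder R]
    [IsOrderedRing R] :
    ∀ {n : ℕ} {g d : Fin n → R}, Antitone g → (∀ i, 0 ≤ g i) →
      (∀ j, 0 ≤ ∑ i ∈ Iic j, d i) → 0 ≤ ∑ i, g i * d i
  | 0, _, _, _, _, _ => by simp
  | n + 1, g, d, hg, hg0, hd => by
    have htail : 0 ≤ ∑ i : Fin n, (g i.castSucc - g (last n)) * d i.castSucc :=
      sum_mul_nonneg_of_antitone_s11
        (fun i j hij => sub_le_sub_right (hg (castSucc_le_castSucc_iff.2 hij)) _)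
        (fun i => sub_nonneg.2 (hg (le_last _)))
        (fun j => by simpa [← map_castSuccEmb_Iic, sum_map] using hd j.castSucc)
    have hlast : 0 ≤ g (last n) * ∑ i, d i :=
      mul_nonneg (hg0 _) (by simpa [← top_eq_last, Iic_top] using hd (last n))
    calc 0 ≤ ∑ i : Fin n, (g i.castSucc - g (last n)) * d i.castSucc
            + g (last n) * ∑ i, d i := add_nonneg htail hlast
      _ = ∑ i, g i * d i := by
          simp only [Fin.sum_univ_castSucc (f := d),
            Fin.sum_univ_castSucc (f := fun i => g i * d i), mul_add, mul_sum, sub_mul,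
            sum_sub_distrib]
          ring

noncomputable section

def poDenom (u t : ℝ) : ℝ := 1 - (1 - t) * u

def poTerm (u t : ℝ) : ℝ := t / poDenom u t

def poSlope (u s t : ℝ) : ℝ := (1 - u) / (poDenom u s * poDenom u t)

end

section

variable {u : ℝ}

theorem poDenom_pos (hu : u ∈ Set.Icc (0 : ℝ) 1) {t : ℝ} (ht : 0 < t) : 0 < poDenom u t := by
  obtain ⟨hu0, hu1⟩ := hu
  have : poDenom u t = (1 - u) + t * u := by unfold poDenom; ring
  rw [this]
  rcases le_total t 1 with h | h
  · nlinarith [mul_nonneg (sub_nonneg.2 h) (sub_nonneg.2 hu1)]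
  · nlinarith [mul_nonneg (sub_nonneg.2 h) hu0]

theorem poDenom_mono (hu : 0 ≤ u) : Monotone (poDenom u) := fun s t hst => by
  unfold poDenom; nlinarith

theorem poTerm_sub_poTerm {s t : ℝ} (hs : poDenom u s ≠ 0) (ht : poDenom u t ≠ 0) :
    poTerm u t - poTerm u s = poSlope u s t * (t - s) := by
  unfold poTerm poSlope at *
  rw [div_sub_div _ _ ht hs, div_mul_eq_mul_div, div_eq_div_iff (mul_ne_zero ht hs)
    (mul_ne_zero hs ht)]
  unfold poDenom
  ring

theorem poSlope_nonneg (hu : u ∈ Set.Icc (0 : ℝ) 1) {s t : ℝ} (hs : 0 < s) (ht : 0 < t) :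
    0 ≤ poSlope u s t :=
  div_nonneg (sub_nonneg.2 hu.2) (mul_pos (poDenom_pos hu hs) (poDenom_pos hu ht)).le

theorem poSlope_le_poSlope (hu : u ∈ Set.Icc (0 : ℝ) 1) {s s' t t' : ℝ} (hs : 0 < s)
    (ht : 0 < t) (hss' : s ≤ s') (htt' : t ≤ t') : poSlope u s' t' ≤ poSlope u s t :=
  div_le_div_of_nonneg_left (sub_nonneg.2 hu.2) (mul_pos (poDenom_pos hu hs) (poDenom_pos hu ht))
    (mul_le_mul (poDenom_mono hu.1 hss') (poDenom_mono hu.1 htt') (poDenom_pos hu ht).le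
      (poDenom_pos hu (hs.trans_le hss')).le)

theorem poTerm_monotoneOn (hu : u ∈ Set.Icc (0 : ℝ) 1) : MonotoneOn (poTerm u) (Set.Ioi 0) :=
  fun s hs t ht hst => by
    rw [← sub_nonneg, poTerm_sub_poTerm (poDenom_pos hu hs).ne' (poDenom_pos hu ht).ne']
    exact mul_nonneg (poSlope_nonneg hu hs ht) (sub_nonneg.2 hst)

theorem sum_poTerm_le_of_sum_Iic_le (hu : u ∈ Set.Icc (0 : ℝ) 1) {n : ℕ} {a b : Fin n → ℝ}
    (ha : Monotone a) (hb : Monotone b) (ha0 : ∀ i, 0 < a i) (hb0 : ∀ i, 0 < b i)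
    (hab : ∀ j, ∑ i ∈ Iic j, a i ≤ ∑ i ∈ Iic j, b i) :
    ∑ i, poTerm u (a i) ≤ ∑ i, poTerm u (b i) := by
  have key := Fin.sum_mul_nonneg_of_antitone_s11 (d := fun i => b i - a i)
    (fun i j hij => poSlope_le_poSlope hu (ha0 i) (hb0 i) (ha hij) (hb hij))
    (fun i => poSlope_nonneg hu (ha0 i) (hb0 i))
    (fun j => by simpa only [sum_sub_distrib, sub_nonneg] using hab j)
  simp only [← poTerm_sub_poTerm (poDenom_pos hu (ha0 _)).ne' (poDenom_pos hu (hb0 _)).ne',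
    sum_sub_distrib, sub_nonneg] at key
  exact key

theorem WSupermaj.sum_poTerm_le (hu : u ∈ Set.Icc (0 : ℝ) 1) {n : ℕ} {lam mu : Fin n → ℝ}
    (hlam : ∀ i, 0 < lam i) (hmu : ∀ i, 0 < mu i) (h : WSupermaj lam mu) :
    ∑ i, poTerm u (lam i) ≤ ∑ i, poTerm u (mu i) := by
  rw [← Equiv.sum_comp (Tuple.sort lam) fun i => poTerm u (lam i),
    ← Equiv.sum_comp (Tuple.sort mu) fun i => poTerm u (mu i)]
  exact sum_poTerm_le_of_sum_Iic_le hu (Tuple.monotone_sort lam) (Tuple.monotone_sort mu)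
    (fun _ => hlam _) (fun _ => hmu _) h

end

theorem parallel_po_rhr_schur_concave_and_increasing {n : ℕ} (u : ℝ)
    (hu : u ∈ Set.Ioo (0:ℝ) 1) :
    (∀ lam : Fin n → ℝ, (∀ i, 0 < lam i) → ∀ i : Fin n, ∀ s t : ℝ,
      0 < s → s ≤ t →
        ∑ j, Function.update lam i s j / (1 - (1 - Function.update lam i s j) * u) ≤
          ∑ j, Function.update lam i t j / (1 - (1 - Function.update lam i t j) * u)) ∧
    (∀ lam mu : Fin n → ℝ, (∀ i, 0 < lam i) → (∀ i, 0 < mu i) →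
      Majorizes lam mu →
        ∑ i, lam i / (1 - (1 - lam i) * u) ≤ ∑ i, mu i / (1 - (1 - mu i) * u)) ∧
    (∀ lam mu : Fin n → ℝ, (∀ i, 0 < lam i) → (∀ i, 0 < mu i) →
      WSupermaj lam mu →
        ∑ i, lam i / (1 - (1 - lam i) * u) ≤ ∑ i, mu i / (1 - (1 - mu i) * u)) := by
  have hu' : u ∈ Set.Icc (0 : ℝ) 1 := Set.Ioo_subset_Icc_self hu
  refine ⟨fun lam _ i s t hs hst => sum_le_sum fun j _ => ?_,
    fun lam mu hlam hmu h => WSupermaj.sum_poTerm_le hu' hlam hmu h.1,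
    fun lam mu hlam hmu h => WSupermaj.sum_poTerm_le hu' hlam hmu h⟩
  rcases eq_or_ne j i with rfl | hji
  · simpa only [Function.update_self, poTerm, poDenom] using
      poTerm_monotoneOn hu' (Set.mem_Ioi.2 hs) (Set.mem_Ioi.2 (hs.trans_le hst)) hst
  · simp only [Function.update_of_ne hji, le_refl]
end

section
/- Let λ₁,...,λₙ > 0 and λ ≥ (1/n)∑_{i=1}^n λᵢ. Then for every u ∈ (0,1), ∑_{i=1}^n λᵢ/(1-(1-λᵢ)u) ≤ nλ/(1-(1-λ)u). (Hence for parallel PO systems X_{n:n} ≤_{rhr} Y_{n:n}, comparing the heterogeneous system with the homogeneous one.) -/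
/-!
For fixed `u ∈ (0,1)` the map `t ↦ t / (1 - (1 - t) u) = t / ((1 - u) + u t)` is concave and
increasing on `t > 0`. Its tangent line at the mean `m` of the `λᵢ` lies above it, and the linear
terms cancel when summed, so `∑ᵢ λᵢ/(1-(1-λᵢ)u) ≤ n m/(1-(1-m)u)`; monotonicity then replaces `m`
by any `λ ≥ m`.
-/

open Finset

/-- The factor by which a proportional odds component with parameter `t` scales the baseline
reversed hazard rate, at `u = F̄(x)`. -/
noncomputable def rhrFactor (u t : ℝ) : ℝ := t / (1 - (1 - t) * u)

section

variable {u : ℝ}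

lemma rhrFactor_denom_pos (hu : u ∈ Set.Icc (0 : ℝ) 1) {t : ℝ} (ht : 0 < t) :
    0 < 1 - (1 - t) * u := by
  rcases hu.2.lt_or_eq with hu1 | rfl
  · nlinarith [mul_nonneg ht.le hu.1]
  · linarith

lemma rhrFactor_le_tangent (hu : u ∈ Set.Icc (0 : ℝ) 1) {t m : ℝ} (ht : 0 < t) (hm : 0 < m) :
    rhrFactor u t ≤ rhrFactor u m + (1 - u) * (t - m) / (1 - (1 - m) * u) ^ 2 := by
  have hDt := rhrFactor_denom_pos hu ht
  have hDm := rhrFactor_denom_pos hu hm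
  have gap : rhrFactor u m + (1 - u) * (t - m) / (1 - (1 - m) * u) ^ 2 - rhrFactor u t
      = (1 - u) * u * (t - m) ^ 2 / ((1 - (1 - t) * u) * (1 - (1 - m) * u) ^ 2) := by
    have hDm2 := pow_ne_zero 2 hDm.ne'
    unfold rhrFactor
    rw [div_add_div _ _ hDm.ne' hDm2, div_sub_div _ _ (mul_ne_zero hDm.ne' hDm2) hDt.ne',
      div_eq_div_iff (by positivity) (by positivity)]
    ring
  have gap_nonneg : 0 ≤ (1 - u) * u * (t - m) ^ 2 / ((1 - (1 - t) * u) * (1 - (1 - m) * u) ^ 2) := by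
    have := sub_nonneg.mpr hu.2
    have := hu.1
    positivity
  linarith

lemma rhrFactor_le_rhrFactor (hu : u ∈ Set.Icc (0 : ℝ) 1) {t s : ℝ} (ht : 0 < t) (hts : t ≤ s) :
    rhrFactor u t ≤ rhrFactor u s := by
  unfold rhrFactor
  rw [div_le_div_iff₀ (rhrFactor_denom_pos hu ht) (rhrFactor_denom_pos hu (ht.trans_le hts))]
  nlinarith [mul_nonneg (sub_nonneg.mpr hts) (sub_nonneg.mpr hu.2)]

lemma sum_rhrFactor_le_card_mul_mean {ι : Type*} (hu : u ∈ Set.Icc (0 : ℝ) 1) {s : Finset ι}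
    (hs : s.Nonempty) {lam : ι → ℝ} (hlam : ∀ i ∈ s, 0 < lam i) :
    ∑ i ∈ s, rhrFactor u (lam i) ≤ #s * rhrFactor u ((∑ i ∈ s, lam i) / #s) := by
  set m := (∑ i ∈ s, lam i) / #s
  have hcard : (0 : ℝ) < #s := by exact_mod_cast hs.card_pos
  have hm : 0 < m := div_pos (sum_pos hlam hs) hcard
  have deviations_sum_zero : ∑ i ∈ s, (lam i - m) = 0 := by
    rw [sum_sub_distrib, sum_const, nsmul_eq_mul, mul_div_cancel₀ _ hcard.ne', sub_self]
  calc ∑ i ∈ s, rhrFactor u (lam i)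
      ≤ ∑ i ∈ s, (rhrFactor u m + (1 - u) * (lam i - m) / (1 - (1 - m) * u) ^ 2) :=
        sum_le_sum fun i hi => rhrFactor_le_tangent hu (hlam i hi) hm
    _ = #s * rhrFactor u m := by
        rw [sum_add_distrib, ← sum_div, ← mul_sum, deviations_sum_zero, mul_zero, zero_div, add_zero,
          sum_const, nsmul_eq_mul]

end

theorem parallel_po_rhr_homog_arithmetic_mean {n : ℕ} (lam : Fin n → ℝ) (l : ℝ)
    (hlam : ∀ i, 0 < lam i)
    (hl : l ≥ (1 / n) * ∑ i, lam i) :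
    ∀ u : ℝ, u ∈ Set.Ioo (0:ℝ) 1 →
      ∑ i, lam i / (1 - (1 - lam i) * u) ≤ n * l / (1 - (1 - l) * u) := by
  intro u hu
  rcases n.eq_zero_or_pos with rfl | hn
  · simp
  have hu' : u ∈ Set.Icc (0 : ℝ) 1 := Set.Ioo_subset_Icc_self hu
  have huniv : (univ : Finset (Fin n)).Nonempty := univ_nonempty_iff.mpr (Fin.pos_iff_nonempty.mp hn)
  have jensen := sum_rhrFactor_le_card_mul_mean hu' huniv fun i _ => hlam i
  rw [card_univ, Fintype.card_fin] at jensen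
  have hmean : 0 < (∑ i, lam i) / n := div_pos (sum_pos (fun i _ => hlam i) huniv) (by positivity)
  have hmean_le : (∑ i, lam i) / n ≤ l := by rw [div_eq_inv_mul, ← one_div]; exact hl
  have hmono := rhrFactor_le_rhrFactor hu' hmean hmean_le
  calc ∑ i, lam i / (1 - (1 - lam i) * u)
      ≤ n * rhrFactor u ((∑ i, lam i) / n) := jensen
    _ ≤ n * l / (1 - (1 - l) * u) := by
        rw [mul_div_assoc]
        exact mul_le_mul_of_nonneg_left hmono (Nat.cast_nonneg n)
end

section
/- Let λ₁,...,λₙ > 0, not all equal, and let λ = (λ₁λ₂⋯λₙ)^{1/n}. Then for every u ∈ (0,1), 1 - ∏_{i=1}^n [(1-u)/(1-(1-λᵢ)u)] ≥ 1 - [(1-u)/(1-(1-λ)u)]^n, i.e., ∏_{i=1}^n [1/(1-(1-λᵢ)u)] ≥ [1/(1-(1-λ)u)]^n. (Hence X_{n:n} ≥_{st} Y_{n:n}: the parallel system with heterogeneous PO components is stochastically larger than the homogeneous one with parameter the geometric mean.) -/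
/-!
With `dᵢ = 1 - (1 - λᵢ) u = (1 - u) + λᵢ u`, the claim is `(1 - u + λ u)ⁿ ≤ ∏ dᵢ`. This is the
superadditivity of the geometric mean, `G(a) + G(b) ≤ G(a + b)`, applied to `aᵢ = 1 - u` and
`bᵢ = λᵢ u`; it follows from AM-GM applied to the ratios `aᵢ / (aᵢ + bᵢ)` and `bᵢ / (aᵢ + bᵢ)`,
whose arithmetic means add up to `1`.
-/

open Finset

namespace Real

variable {ι : Type*}

theorem geom_mean_add_le_weighted (s : Finset ι) (w a b : ι → ℝ) (hw : ∀ i ∈ s, 0 ≤ w i)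
    (hw' : ∑ i ∈ s, w i = 1) (ha : ∀ i ∈ s, 0 ≤ a i) (hb : ∀ i ∈ s, 0 ≤ b i)
    (hab : ∀ i ∈ s, 0 < a i + b i) :
    ∏ i ∈ s, a i ^ w i + ∏ i ∈ s, b i ^ w i ≤ ∏ i ∈ s, (a i + b i) ^ w i := by
  have hP : 0 < ∏ i ∈ s, (a i + b i) ^ w i :=
    prod_pos fun i hi => rpow_pos_of_pos (hab i hi) _
  have normalize (c : ι → ℝ) (hc : ∀ i ∈ s, 0 ≤ c i) :
      ∏ i ∈ s, (c i / (a i + b i)) ^ w i =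
        (∏ i ∈ s, c i ^ w i) / ∏ i ∈ s, (a i + b i) ^ w i := by
    rw [← prod_div_distrib]
    exact prod_congr rfl fun i hi => div_rpow (hc i hi) (hab i hi).le _
  have amgm (c : ι → ℝ) (hc : ∀ i ∈ s, 0 ≤ c i) :
      ∏ i ∈ s, (c i / (a i + b i)) ^ w i ≤ ∑ i ∈ s, w i * (c i / (a i + b i)) :=
    geom_mean_le_arith_mean_weighted s w _ hw hw' fun i hi => div_nonneg (hc i hi) (hab i hi).le
  have means_sum :
      ∑ i ∈ s, w i * (a i / (a i + b i)) + ∑ i ∈ s, w i * (b i / (a i + b i)) = 1 := by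
    rw [← sum_add_distrib, ← hw']
    refine sum_congr rfl fun i hi => ?_
    field_simp [(hab i hi).ne']
  rw [← div_le_one hP, add_div, ← normalize a ha, ← normalize b hb, ← means_sum]
  exact add_le_add (amgm a ha) (amgm b hb)

theorem one_sub_one_sub_geom_mean_mul_pow_le_prod (s : Finset ι) (lam : ι → ℝ)
    (hlam : ∀ i ∈ s, 0 ≤ lam i) {u : ℝ} (hu0 : 0 ≤ u) (hu1 : u < 1) :
    (1 - (1 - (∏ i ∈ s, lam i) ^ ((1 : ℝ) / #s)) * u) ^ #s ≤ ∏ i ∈ s, (1 - (1 - lam i) * u) := by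
  rcases s.eq_empty_or_nonempty with rfl | hs
  · simp
  have hn : #s ≠ 0 := hs.card_pos.ne'
  have hw : ∑ _i ∈ s, (1 : ℝ) / #s = 1 := by
    rw [sum_const, nsmul_eq_mul]
    field_simp
  have prod_const_rpow (c : ℝ) (hc : 0 ≤ c) : ∏ _i ∈ s, c ^ ((1 : ℝ) / #s) = c := by
    rw [← rpow_sum_of_nonneg hc fun _ _ => by positivity, hw, rpow_one]
  have superadd := geom_mean_add_le_weighted s (fun _ => (1 : ℝ) / #s) (fun _ => 1 - u)
    (fun i => lam i * u) (fun _ _ => by positivity) hw (fun _ _ => by linarith)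
    (fun i hi => mul_nonneg (hlam i hi) hu0) (fun i hi => by nlinarith [hlam i hi])
  rw [prod_const_rpow _ (by linarith), prod_congr rfl fun i hi => mul_rpow (hlam i hi) hu0,
    prod_mul_distrib, prod_const_rpow _ hu0, finsetProd_rpow _ _ hlam,
    finsetProd_rpow _ _ fun i hi => by nlinarith [hlam i hi]] at superadd
  calc (1 - (1 - (∏ i ∈ s, lam i) ^ ((1 : ℝ) / #s)) * u) ^ #s
      = (1 - u + (∏ i ∈ s, lam i) ^ ((1 : ℝ) / #s) * u) ^ #s := by ring
    _ ≤ ((∏ i ∈ s, (1 - u + lam i * u)) ^ ((1 : ℝ) / #s)) ^ #s :=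
        pow_le_pow_left₀
          (add_nonneg (by linarith) (mul_nonneg (rpow_nonneg (prod_nonneg hlam) _) hu0)) superadd _
    _ = ∏ i ∈ s, (1 - (1 - lam i) * u) := by
        rw [one_div, rpow_inv_natCast_pow _ hn]
        · exact prod_congr rfl fun i _ => by ring
        · exact prod_nonneg fun i hi => by nlinarith [hlam i hi]

end Real

theorem parallel_po_st_geometric_mean_general {n : ℕ} (lam : Fin n → ℝ)
    (hlam : ∀ i, 0 < lam i) :
    ∀ u : ℝ, u ∈ Set.Ioo (0:ℝ) 1 →
      1 - ∏ i, (1 - u) / (1 - (1 - lam i) * u) ≥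
        1 - ((1 - u) / (1 - (1 - (∏ i, lam i) ^ ((1:ℝ) / n)) * u)) ^ n := by
  rintro u ⟨hu0, hu1⟩
  have key := Real.one_sub_one_sub_geom_mean_mul_pow_le_prod univ lam (fun i _ => (hlam i).le)
    hu0.le hu1
  rw [card_univ, Fintype.card_fin] at key
  have hG : 0 ≤ (∏ i, lam i) ^ ((1 : ℝ) / n) :=
    Real.rpow_nonneg (prod_nonneg fun i _ => (hlam i).le) _
  have hd : 0 < 1 - (1 - (∏ i, lam i) ^ ((1 : ℝ) / n)) * u := by nlinarith
  rw [ge_iff_le, sub_le_sub_iff_left, prod_div_distrib, prod_const, card_univ,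
    Fintype.card_fin, div_pow]
  exact div_le_div_of_nonneg_left (pow_nonneg (by linarith) n) (pow_pos hd n) key

theorem parallel_po_st_geometric_mean {n : ℕ} (lam : Fin n → ℝ)
    (hlam : ∀ i, 0 < lam i) (hne : ∃ i j : Fin n, lam i ≠ lam j) :
    ∀ u : ℝ, u ∈ Set.Ioo (0:ℝ) 1 →
      1 - ∏ i, (1 - u) / (1 - (1 - lam i) * u) ≥
        1 - ((1 - u) / (1 - (1 - (∏ i, lam i) ^ ((1:ℝ) / n)) * u)) ^ n :=
  parallel_po_st_geometric_mean_general lam hlam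
end

section
/- Let n₁, n₂ ≥ 1 and 0 < λ₁ ≤ η ≤ μ₁. Then the function u ↦ [n₁μ₁/(1-(1-μ₁)u) + n₂η/(1-(1-η)u)] / [n₁λ₁/(1-(1-λ₁)u) + n₂η/(1-(1-η)u)] is decreasing in u ∈ (0,1). (Since u = F̄(x) is decreasing in x, this says r̃_{Y_{n:n}}(x)/r̃_{X_{n:n}}(x) is increasing in x, i.e., X_{n:n} ≲_{rhr} Y_{n:n}: X_{n:n} ages faster than Y_{n:n} in terms of the reversed hazard rate.) -/
/-!
Each proportional-odds term `c / (1 - (1 - a) u)` divided by another such term with a smaller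
parameter `b ≤ a` is antitone in `u`, since the cross difference of the denominators is
`(a - b) (v - u)`. Written without division, "`f / g` is antitone" is additive in `f` and in `g`,
so the quotient of the two sums of such terms is antitone as soon as each numerator parameter
`μ₁, η` dominates each denominator parameter `λ₁, η`.
-/

def DivAntitoneOn (f g : ℝ → ℝ) (s : Set ℝ) : Prop :=
  ∀ ⦃u⦄, u ∈ s → ∀ ⦃v⦄, v ∈ s → u ≤ v → f v * g u ≤ f u * g v

namespace DivAntitoneOn

variable {f f₁ f₂ g g₁ g₂ : ℝ → ℝ} {s : Set ℝ}

theorem add_left (h₁ : DivAntitoneOn f₁ g s) (h₂ : DivAntitoneOn f₂ g s) :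
    DivAntitoneOn (fun u => f₁ u + f₂ u) g s := fun u hu v hv huv => by
  simpa only [add_mul] using add_le_add (h₁ hu hv huv) (h₂ hu hv huv)

theorem add_right (h₁ : DivAntitoneOn f g₁ s) (h₂ : DivAntitoneOn f g₂ s) :
    DivAntitoneOn f (fun u => g₁ u + g₂ u) s := fun u hu v hv huv => by
  simpa only [mul_add] using add_le_add (h₁ hu hv huv) (h₂ hu hv huv)

theorem antitoneOn_div (h : DivAntitoneOn f g s) (hg : ∀ u ∈ s, 0 < g u) :
    AntitoneOn (fun u => f u / g u) s := fun u hu v hv huv =>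
  (div_le_div_iff₀ (hg v hv) (hg u hu)).mpr (h hu hv huv)

end DivAntitoneOn

-- `1 - (1 - a) u = (1 - u) + a u` is a convex combination of `1` and `a`.
theorem one_sub_one_sub_mul_pos_s14 {a u : ℝ} (ha : 0 < a) (hu : u ∈ Set.Icc (0 : ℝ) 1) :
    0 < 1 - (1 - a) * u := by
  obtain ⟨hu₀, hu₁ | rfl⟩ := And.imp_right le_iff_lt_or_eq.mp hu
  · nlinarith
  · linarith

theorem divAntitoneOn_div_one_sub_one_sub_mul {a b c d : ℝ} (hc : 0 ≤ c) (hd : 0 ≤ d)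
    (hb : 0 < b) (hba : b ≤ a) :
    DivAntitoneOn (fun u => c / (1 - (1 - a) * u)) (fun u => d / (1 - (1 - b) * u))
      (Set.Icc 0 1) := by
  intro u hu v hv huv
  have hau := one_sub_one_sub_mul_pos_s14 (hb.trans_le hba) hu
  have hav := one_sub_one_sub_mul_pos_s14 (hb.trans_le hba) hv
  have hbu := one_sub_one_sub_mul_pos_s14 hb hu
  have hbv := one_sub_one_sub_mul_pos_s14 hb hv
  rw [div_mul_div_comm, div_mul_div_comm, div_le_div_iff₀ (by positivity) (by positivity)]
  have hcross : (1 - (1 - a) * u) * (1 - (1 - b) * v) ≤ (1 - (1 - a) * v) * (1 - (1 - b) * u) := by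
    nlinarith [mul_nonneg (sub_nonneg.mpr hba) (sub_nonneg.mpr huv)]
  exact mul_le_mul_of_nonneg_left hcross (mul_nonneg hc hd)

theorem parallel_po_relative_rhr_ageing_general
    (n₁ n₂ : ℕ) (hn₁ : 1 ≤ n₁)
    (lam₁ mu₁ eta : ℝ) (hl₁ : 0 < lam₁)
    (h₁ : lam₁ ≤ eta) (h₂ : eta ≤ mu₁) :
    AntitoneOn (fun u : ℝ =>
      (n₁ * mu₁ / (1 - (1 - mu₁) * u) + n₂ * eta / (1 - (1 - eta) * u)) /
        (n₁ * lam₁ / (1 - (1 - lam₁) * u) + n₂ * eta / (1 - (1 - eta) * u)))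
      (Set.Ioo (0:ℝ) 1) := by
  have he : 0 < eta := hl₁.trans_le h₁
  have hm : 0 < mu₁ := he.trans_le h₂
  have hc (n : ℕ) {a : ℝ} (ha : 0 < a) : 0 ≤ (n : ℝ) * a := by positivity
  have key :=
    ((divAntitoneOn_div_one_sub_one_sub_mul (hc n₁ hm) (hc n₁ hl₁) hl₁ (h₁.trans h₂)).add_right
      (divAntitoneOn_div_one_sub_one_sub_mul (hc n₁ hm) (hc n₂ he) he h₂)).add_left
    ((divAntitoneOn_div_one_sub_one_sub_mul (hc n₂ he) (hc n₁ hl₁) hl₁ h₁).add_right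
      (divAntitoneOn_div_one_sub_one_sub_mul (hc n₂ he) (hc n₂ he) he le_rfl))
  refine (key.antitoneOn_div fun u hu => ?_).mono Set.Ioo_subset_Icc_self
  have : (0 : ℝ) < n₁ := by exact_mod_cast hn₁
  have := one_sub_one_sub_mul_pos_s14 hl₁ hu
  have := one_sub_one_sub_mul_pos_s14 he hu
  positivity

theorem parallel_po_relative_rhr_ageing
    (n₁ n₂ : ℕ) (hn₁ : 1 ≤ n₁) (hn₂ : 1 ≤ n₂)
    (lam₁ mu₁ eta : ℝ) (hl₁ : 0 < lam₁)
    (h₁ : lam₁ ≤ eta) (h₂ : eta ≤ mu₁) :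
    AntitoneOn (fun u : ℝ =>
      (n₁ * mu₁ / (1 - (1 - mu₁) * u) + n₂ * eta / (1 - (1 - eta) * u)) /
        (n₁ * lam₁ / (1 - (1 - lam₁) * u) + n₂ * eta / (1 - (1 - eta) * u)))
      (Set.Ioo (0:ℝ) 1) :=
  parallel_po_relative_rhr_ageing_general n₁ n₂ hn₁ lam₁ mu₁ eta hl₁ h₁ h₂
end

section
/- For x, y ∈ ℝⁿ with positive entries: x majorizes y implies x weakly supermajorizes y; x weakly supermajorizes y implies x is p-larger than y; and x is p-larger than y implies x reciprocally majorizes y. -/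
open Finset

/-- `x` is p-larger than `y`. -/
def PLarger {n : ℕ} (x y : Fin n → ℝ) : Prop :=
  ∀ j : Fin n, ∏ i ∈ Finset.Iic j, (x ∘ Tuple.sort x) i ≤
    ∏ i ∈ Finset.Iic j, (y ∘ Tuple.sort y) i

/-- `x` reciprocally majorizes `y`. -/
def RecipMaj {n : ℕ} (x y : Fin n → ℝ) : Prop :=
  ∀ j : Fin n, ∑ i ∈ Finset.Iic j, 1 / (x ∘ Tuple.sort x) i ≥
    ∑ i ∈ Finset.Iic j, 1 / (y ∘ Tuple.sort y) i

/-!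
Write `u`, `v` for the increasing rearrangements of `x`, `y`. Both nontrivial implications follow
from Abel summation with the decreasing weights `1 / v i`: if the partial sums of `d` are
nonnegative, so are those of `d i / v i`. For `d = v - u` this gives
`∑ log (v i / u i) ≥ ∑ (1 - u i / v i) ≥ 0`; for `d i = log (v i / u i)` it gives
`∑ (1 / u i - 1 / v i) ≥ ∑ log (v i / u i) / v i ≥ 0`.
-/

section Abel

variable {ι R : Type*} [LinearOrder ι] [CommRing R] [LinearOrder R] [IsOrderedRing R]

/-- Abel summation: peeling off the largest index `a` writes the sum as
`∑ i ∈ t, d i * (w i - w a) + w a * ∑ i ∈ insert a t, d i`. -/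
theorem Finset.sum_mul_nonneg_of_partial_sums_nonneg (s : Finset ι) {d w : ι → R}
    (hw : ∀ i ∈ s, 0 ≤ w i) (hw_anti : AntitoneOn w s)
    (hd : ∀ j ∈ s, 0 ≤ ∑ i ∈ s with i ≤ j, d i) :
    0 ≤ ∑ i ∈ s, d i * w i := by
  classical
  induction s using Finset.induction_on_max generalizing w with
  | empty => simp
  | insert a t hlt ih =>
    have ha : a ∉ t := fun h => (hlt a h).false
    have htop : ∀ i ∈ insert a t, i ≤ a := by
      simp only [mem_insert, forall_eq_or_imp, le_refl, true_and]
      exact fun i hi => (hlt i hi).le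
    have hsplit : ∑ i ∈ insert a t, d i * w i
        = ∑ i ∈ t, d i * (w i - w a) + w a * ∑ i ∈ insert a t, d i := by
      simp only [sum_insert ha, mul_sub, sum_sub_distrib, ← sum_mul]
      ring
    have hsum_a : ∑ i ∈ insert a t with i ≤ a, d i = ∑ i ∈ insert a t, d i :=
      sum_congr (filter_true_of_mem htop) fun _ _ => rfl
    have hfilter : ∀ j ∈ t, {i ∈ insert a t | i ≤ j} = {i ∈ t | i ≤ j} := fun j hj => by
      rw [filter_insert, if_neg (hlt j hj).not_ge]
    rw [hsplit]
    refine add_nonneg (ih (fun i hi => ?_) (fun i hi k hk hik => ?_) fun j hj => ?_) ?_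
    · exact sub_nonneg.2 (hw_anti (mem_insert_of_mem hi) (mem_insert_self a t) (hlt i hi).le)
    · exact sub_le_sub_right (hw_anti (mem_insert_of_mem hi) (mem_insert_of_mem hk) hik) _
    · rw [← hfilter j hj]; exact hd j (mem_insert_of_mem hj)
    · exact mul_nonneg (hw a (mem_insert_self a t)) (hsum_a ▸ hd a (mem_insert_self a t))

theorem Finset.sum_Iic_mul_nonneg [LocallyFiniteOrderBot ι] {d w : ι → R}
    (hw : ∀ i, 0 ≤ w i) (hw_anti : Antitone w) (hd : ∀ j, 0 ≤ ∑ i ∈ Iic j, d i) (j : ι) :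
    0 ≤ ∑ i ∈ Iic j, d i * w i := by
  refine sum_mul_nonneg_of_partial_sums_nonneg _ (fun i _ => hw i)
    (hw_anti.antitoneOn _) fun k hk => ?_
  have : {i ∈ Iic j | i ≤ k} = Iic k := by
    ext i
    simp only [mem_filter, mem_Iic, and_iff_right_iff_imp]
    exact fun hik => hik.trans (mem_Iic.1 hk)
  rw [this]
  exact hd k

end Abel

theorem Monotone.antitone_one_div {ι : Type*} [Preorder ι] {v : ι → ℝ} (hv_mono : Monotone v)
    (hv : ∀ i, 0 < v i) : Antitone fun i => 1 / v i :=
  fun _ _ hij => one_div_le_one_div_of_le (hv _) (hv_mono hij)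

section PartialSums

variable {ι : Type*} [LinearOrder ι] [LocallyFiniteOrderBot ι] {u v : ι → ℝ}

/-- Weighting `v i - u i` by `1 / v i` and using `1 - u / v ≤ log (v / u)`. -/
theorem prod_Iic_le_prod_Iic_of_sum_Iic_le (hu : ∀ i, 0 < u i) (hv : ∀ i, 0 < v i)
    (hv_mono : Monotone v) (h : ∀ j, ∑ i ∈ Iic j, u i ≤ ∑ i ∈ Iic j, v i) (j : ι) :
    ∏ i ∈ Iic j, u i ≤ ∏ i ∈ Iic j, v i := by
  have habel : 0 ≤ ∑ i ∈ Iic j, (v i - u i) * (1 / v i) :=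
    sum_Iic_mul_nonneg (fun i => (one_div_pos.2 (hv i)).le)
      (hv_mono.antitone_one_div hv)
      (fun k => by rw [sum_sub_distrib, sub_nonneg]; exact h k) j
  have hterm : ∀ i ∈ Iic j, (v i - u i) * (1 / v i) ≤ Real.log (v i) - Real.log (u i) :=
    fun i _ => by
      have := Real.one_sub_inv_le_log_of_pos (div_pos (hv i) (hu i))
      rw [Real.log_div (hv i).ne' (hu i).ne', inv_div] at this
      calc (v i - u i) * (1 / v i) = 1 - u i / v i := by field_simp [(hv i).ne']
        _ ≤ _ := this
  have hlog : Real.log (∏ i ∈ Iic j, u i) ≤ Real.log (∏ i ∈ Iic j, v i) := by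
    rw [Real.log_prod fun i _ => (hu i).ne', Real.log_prod fun i _ => (hv i).ne', ← sub_nonneg,
      ← sum_sub_distrib]
    exact habel.trans (sum_le_sum hterm)
  exact (Real.log_le_log_iff (prod_pos fun i _ => hu i) (prod_pos fun i _ => hv i)).1 hlog

/-- Weighting `log (v i / u i)` by `1 / v i` and using `log (v / u) ≤ v / u - 1`. -/
theorem sum_Iic_inv_le_sum_Iic_inv_of_prod_Iic_le (hu : ∀ i, 0 < u i) (hv : ∀ i, 0 < v i)
    (hv_mono : Monotone v) (h : ∀ j, ∏ i ∈ Iic j, u i ≤ ∏ i ∈ Iic j, v i) (j : ι) :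
    ∑ i ∈ Iic j, 1 / v i ≤ ∑ i ∈ Iic j, 1 / u i := by
  have habel : 0 ≤ ∑ i ∈ Iic j, Real.log (v i / u i) * (1 / v i) := by
    refine sum_Iic_mul_nonneg (fun i => (one_div_pos.2 (hv i)).le)
      (hv_mono.antitone_one_div hv) (fun k => ?_) j
    simp only [Real.log_div (hv _).ne' (hu _).ne', sum_sub_distrib, sub_nonneg]
    rw [← Real.log_prod fun i _ => (hu i).ne', ← Real.log_prod fun i _ => (hv i).ne']
    exact Real.log_le_log (prod_pos fun i _ => hu i) (h k)
  have hterm : ∀ i ∈ Iic j, Real.log (v i / u i) * (1 / v i) ≤ 1 / u i - 1 / v i :=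
    fun i _ => by
      have := Real.log_le_sub_one_of_pos (div_pos (hv i) (hu i))
      calc Real.log (v i / u i) * (1 / v i) ≤ (v i / u i - 1) * (1 / v i) :=
            mul_le_mul_of_nonneg_right this (one_div_pos.2 (hv i)).le
        _ = 1 / u i - 1 / v i := by field_simp [(hv i).ne', (hu i).ne']
  have := habel.trans (sum_le_sum hterm)
  rwa [sum_sub_distrib, sub_nonneg] at this

end PartialSums

theorem majorization_chain {n : ℕ} (x y : Fin n → ℝ)
    (hx : ∀ i, 0 < x i) (hy : ∀ i, 0 < y i) :
    (Majorizes x y → WSupermaj x y) ∧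
    (WSupermaj x y → PLarger x y) ∧
    (PLarger x y → RecipMaj x y) :=
  ⟨And.left,
    prod_Iic_le_prod_Iic_of_sum_Iic_le (fun _ => hx _) (fun _ => hy _) (Tuple.monotone_sort y),
    sum_Iic_inv_le_sum_Iic_inv_of_prod_Iic_le (fun _ => hx _) (fun _ => hy _)
      (Tuple.monotone_sort y)⟩
end

section
/- Let u, v: (0,1) → (0,∞) be defined by u(t) = 1/(1-t), v(t) = t/(1-t), and let 0 < λ̄₂ ≤ λ̄₁ < 1, 0 < μ̄₂ ≤ μ̄₁ < 1, n₁ ≥ n₂ ≥ 1 (positive integers). Then for any s ∈ (0,1), the expression n₁u(λ̄₁s)v'(λ̄₁s)[n₁u(λ̄₁s) + n₂u(λ̄₂s)] + n₁n₂u(λ̄₂s)u'(λ̄₁s)[v(λ̄₁s) - v(λ̄₂s)] minus the analogous expression with the roles of λ̄₁ and λ̄₂ (and n₁, n₂) swapped is nonnegative; equivalently, the map (λ̄₁,...,λ̄₁,λ̄₂,...,λ̄₂) ↦ [∑ᵢ u(λ̄ᵢs)v(λ̄ᵢs)]/[∑ᵢ u(λ̄ᵢs)] satisfies the Schur-convexity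 partial-derivative criterion on the multiple-outlier parameter set. -/
/-- Core computation in the proof of Theorem 3.2: with u(t) = 1/(1-t),
v(t) = t/(1-t), u'(t) = v'(t) = 1/(1-t)², parameters 0 < λ̄₂ ≤ λ̄₁ < 1,
0 < μ̄₂ ≤ μ̄₁ < 1 and multiplicities n₁ ≥ n₂ ≥ 1, for any s ∈ (0,1) the
difference ∂φ/∂λ̄ᵢ - ∂φ/∂λ̄ⱼ (i in the first block, j in the second) has
nonnegative sign, i.e. the stated expression minus its swapped analogue is
nonnegative. -/
theorem po_schur_convexity_core (n₁ n₂ : ℕ) (hn : n₂ ≤ n₁) (hn₂ : 1 ≤ n₂)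
    (lb₁ lb₂ mb₁ mb₂ s : ℝ)
    (hlb₂ : 0 < lb₂) (hlb : lb₂ ≤ lb₁) (hlb₁ : lb₁ < 1)
    (hmb₂ : 0 < mb₂) (hmb : mb₂ ≤ mb₁) (hmb₁ : mb₁ < 1)
    (hs : s ∈ Set.Ioo (0:ℝ) 1) :
    0 ≤
      ((n₁ : ℝ) * (1 / (1 - lb₁ * s)) * (1 / (1 - lb₁ * s) ^ 2) *
          ((n₁ : ℝ) * (1 / (1 - lb₁ * s)) + (n₂ : ℝ) * (1 / (1 - lb₂ * s))) +
        (n₁ : ℝ) * (n₂ : ℝ) * (1 / (1 - lb₂ * s)) * (1 / (1 - lb₁ * s) ^ 2) *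
          (lb₁ * s / (1 - lb₁ * s) - lb₂ * s / (1 - lb₂ * s))) -
      ((n₂ : ℝ) * (1 / (1 - lb₂ * s)) * (1 / (1 - lb₂ * s) ^ 2) *
          ((n₁ : ℝ) * (1 / (1 - lb₁ * s)) + (n₂ : ℝ) * (1 / (1 - lb₂ * s))) +
        (n₁ : ℝ) * (n₂ : ℝ) * (1 / (1 - lb₁ * s)) * (1 / (1 - lb₂ * s) ^ 2) *
          (lb₂ * s / (1 - lb₂ * s) - lb₁ * s / (1 - lb₁ * s))) := by

  obtain ⟨hs0, hs1⟩ := hs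
  have ha : 0 < 1 - lb₁ * s := by nlinarith
  have hb : 0 < 1 - lb₂ * s := by nlinarith
  have hab : 1 - lb₁ * s ≤ 1 - lb₂ * s := by nlinarith
  have hN : (n₂ : ℝ) ≤ (n₁ : ℝ) := by exact_mod_cast hn
  have hN2 : (1 : ℝ) ≤ (n₂ : ℝ) := by exact_mod_cast hn₂
  set a := 1 - lb₁ * s with ha'
  set b := 1 - lb₂ * s with hb'
  have key : lb₁ * s = 1 - a := by ring
  have key2 : lb₂ * s = 1 - b := by ring
  rw [key, key2, ← sub_nonneg]
  have heq :
      ((n₁ : ℝ) * (1 / a) * (1 / a ^ 2) * ((n₁ : ℝ) * (1 / a) + (n₂ : ℝ) * (1 / b)) +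
          (n₁ : ℝ) * (n₂ : ℝ) * (1 / b) * (1 / a ^ 2) * ((1 - a) / a - (1 - b) / b)) -
        ((n₂ : ℝ) * (1 / b) * (1 / b ^ 2) * ((n₁ : ℝ) * (1 / a) + (n₂ : ℝ) * (1 / b)) +
          (n₁ : ℝ) * (n₂ : ℝ) * (1 / a) * (1 / b ^ 2) * ((1 - b) / b - (1 - a) / a)) =
      ((n₁ : ℝ) ^ 2 * b ^ 4 - (n₂ : ℝ) ^ 2 * a ^ 4 + (n₁ : ℝ) * (n₂ : ℝ) * a * b * (b ^ 2 - a ^ 2)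
        + (n₁ : ℝ) * (n₂ : ℝ) * (b - a) * (a * b ^ 2 + a ^ 2 * b)) / (a ^ 4 * b ^ 4) := by
    field_simp
    ring
  rw [heq, sub_zero]
  apply div_nonneg _ (by positivity)
  have hn2 : (0:ℝ) ≤ (n₂ : ℝ) := by linarith
  have hn1 : (0:ℝ) ≤ (n₁ : ℝ) := le_trans hn2 hN
  have h1 : (n₂ : ℝ) ^ 2 * a ^ 4 ≤ (n₁ : ℝ) ^ 2 * b ^ 4 := by
    have h4' := pow_le_pow_left₀ ha.le hab 4
    have hsq : (n₂:ℝ) ^ 2 ≤ (n₁:ℝ) ^ 2 := pow_le_pow_left₀ hn2 hN 2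
    exact mul_le_mul hsq h4' (by positivity) (by positivity)
  have h2 : a ^ 2 ≤ b ^ 2 := pow_le_pow_left₀ ha.le hab 2
  have h3 : (0:ℝ) ≤ (n₁ : ℝ) * n₂ * a * b * (b ^ 2 - a ^ 2) := by
    apply mul_nonneg; apply mul_nonneg; apply mul_nonneg; apply mul_nonneg
    all_goals first | exact hn1 | exact hn2 | exact ha.le | exact hb.le | linarith
  have h4 : (0:ℝ) ≤ (n₁ : ℝ) * n₂ * (b - a) * (a * b ^ 2 + a ^ 2 * b) := by
    apply mul_nonneg; apply mul_nonneg; apply mul_nonneg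
    · exact hn1
    · exact hn2
    · linarith
    · positivity
  linarith
end
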